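/- The function H_M(x,y,z,E,B) = (1/2)α²y² - αyB + αμ²z + (1/2)μ²E² + (1/2)B² is a first integral of the ODE system ẋ = -y, ẏ = x + zE, ż = -yE, Ė = B, Ḃ = α(x + zE) - μ²E. -/

import Mathlib

section MilonniHamiltonian

variable {𝕜 : Type*} [NontriviallyNormedField 𝕜]

def milonniHamiltonian (α μ y z E B : 𝕜) : 𝕜 :=
  (1/2) * α ^ 2 * y ^ 2 - α * y * B + α * μ ^ 2 * z + (1/2) * μ ^ 2 * E ^ 2 + (1/2) * B ^ 2

theorem hasDerivAt_milonniHamiltonian [CharZero 𝕜] (α μ : 𝕜) {y z E B : 𝕜 → 𝕜}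
    {y' z' E' B' t : 𝕜}
    (hy : HasDerivAt y y' t) (hz : HasDerivAt z z' t) (hE : HasDerivAt E E' t)
    (hB : HasDerivAt B B' t) :
    HasDerivAt (fun s => milonniHamiltonian α μ (y s) (z s) (E s) (B s))
      (α ^ 2 * y t * y' - α * (y' * B t + y t * B') + α * μ ^ 2 * z'
        + μ ^ 2 * E t * E' + B t * B') t := by
  have h := ((((hy.pow 2).const_mul ((1/2) * α ^ 2)).sub ((hy.mul hB).const_mul α)).add
    (hz.const_mul (α * μ ^ 2))).add ((hE.pow 2).const_mul ((1/2) * μ ^ 2))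
  refine ((h.add ((hB.pow 2).const_mul (1/2))).congr_deriv ?_).congr_of_eventuallyEq
    (.of_eq ?_)
  · push_cast
    ring
  · funext s
    simp only [milonniHamiltonian, Pi.add_apply, Pi.sub_apply, Pi.mul_apply, Pi.pow_apply]
    ring

end MilonniHamiltonian

theorem milonni_lieDerivative_eq_zero {R : Type*} [CommRing R] (α μ x y z E B : R) :
    α ^ 2 * y * (x + z * E) - α * ((x + z * E) * B + y * (α * (x + z * E) - μ ^ 2 * E))
      + α * μ ^ 2 * (-y * E) + μ ^ 2 * E * B + B * (α * (x + z * E) - μ ^ 2 * E) = 0 := by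
  ring

theorem HM_first_integral_Milonni (α μ : ℝ) (x y z E B : ℝ → ℝ)
    (hy : ∀ t, HasDerivAt y (x t + z t * E t) t)
    (hz : ∀ t, HasDerivAt z (-(y t) * E t) t)
    (hE : ∀ t, HasDerivAt E (B t) t)
    (hB : ∀ t, HasDerivAt B (α * (x t + z t * E t) - μ ^ 2 * E t) t) :
    ∀ t, HasDerivAt
      (fun s => (1/2) * α ^ 2 * y s ^ 2 - α * y s * B s + α * μ ^ 2 * z s
        + (1/2) * μ ^ 2 * E s ^ 2 + (1/2) * B s ^ 2) 0 t := by
  intro t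
  have h := hasDerivAt_milonniHamiltonian α μ (hy t) (hz t) (hE t) (hB t)
  rwa [milonni_lieDerivative_eq_zero] at h
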